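/- Let E be a finite directed graph and Ω_E = (⋃_{N≥0} E^N_{sinks}) ∪ E^∞ the path space, where E^N_{sinks} is the set of paths of length N ending at a sink and E^∞ the set of infinite paths, equipped with the product (cylinder) topology generated by the sets U_ν = {νμ ∈ Ω_E} for finite paths ν. Define μ ~ ν iff μ, ν are both infinite and eventually equal (μ_N μ_{N+1}… = ν_N ν_{N+1}… for some N), or both are finite paths of the same length N ending at sinks with r(μ_N) = r(ν_N). Then the quotient map q : Ω_E → Ω_E/~ is open, and the sets U_{v,n} := {[μ] : ∃ path η of some length k with s(η) = v and r(η) = μ_{n+k}} form a basis for the quotient topology. -/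

import Mathlib

/-- A finite directed graph `E = (E⁰, E¹, r, s)`. -/
structure FinGraph where
  V : Type
  E : Type
  [fV : Fintype V]
  [fE : Fintype E]
  [dV : DecidableEq V]
  [dE : DecidableEq E]
  s : E → V
  r : E → V

attribute [instance] FinGraph.fV FinGraph.fE FinGraph.dV FinGraph.dE

/-- A path of length `n` in the graph `G`: `n+1` vertices joined by `n` consecutive edges. -/
structure GPath (G : FinGraph) (n : ℕ) where
  vert : Fin (n + 1) → G.V
  edge : Fin n → G.E
  src_eq : ∀ i : Fin n, G.s (edge i) = vert i.castSucc
  rng_eq : ∀ i : Fin n, G.r (edge i) = vert i.succ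

namespace GPath
variable {G : FinGraph} {n : ℕ}

/-- The source (initial vertex) of a path. -/
def src (p : GPath G n) : G.V := p.vert 0

/-- The range (final vertex) of a path. -/
def rng (p : GPath G n) : G.V := p.vert (Fin.last n)

end GPath

/-- An infinite path in `G`. -/
structure InfPath (G : FinGraph) where
  vert : ℕ → G.V
  edge : ℕ → G.E
  src_eq : ∀ i : ℕ, G.s (edge i) = vert i
  rng_eq : ∀ i : ℕ, G.r (edge i) = vert (i + 1)

/-- A sink: a vertex emitting no edge. -/
def IsSink (G : FinGraph) (v : G.V) : Prop := ∀ e : G.E, G.s e ≠ v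

/-- The path space `Ω_E`: finite paths ending at sinks together with infinite paths. -/
def Omega (G : FinGraph) : Type :=
  (Σ n : ℕ, {p : GPath G n // IsSink G (GPath.rng p)}) ⊕ InfPath G

/-- `ω` extends the finite path `ν` (i.e. `ω` belongs to the cylinder `U_ν`). -/
def ExtendsPath {G : FinGraph} {n : ℕ} (ν : GPath G n) : Omega G → Prop
  | .inl ⟨N, p⟩ => ∃ h : n ≤ N,
      (∀ i : Fin (n + 1), p.1.vert (Fin.castLE (Nat.succ_le_succ h) i) = ν.vert i) ∧
      (∀ i : Fin n, p.1.edge (Fin.castLE h i) = ν.edge i)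
  | .inr q => (∀ i : Fin (n + 1), q.vert i = ν.vert i) ∧
      (∀ i : Fin n, q.edge i = ν.edge i)

/-- The cylinder-set (product) topology on `Ω_E`. -/
instance (G : FinGraph) : TopologicalSpace (Omega G) :=
  TopologicalSpace.generateFrom
    {U | ∃ (n : ℕ) (ν : GPath G n), U = {ω : Omega G | ExtendsPath ν ω}}

/-- Tail equivalence on `Ω_E`: infinite paths eventually equal; finite sink-paths of the
same length with the same range. -/
def OmegaRel (G : FinGraph) : Omega G → Omega G → Prop
  | .inl ⟨N, p⟩, .inl ⟨M, q⟩ => N = M ∧ GPath.rng p.1 = GPath.rng q.1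
  | .inr p, .inr q => ∃ N : ℕ, ∀ k : ℕ, N ≤ k → p.edge k = q.edge k
  | _, _ => False

/-- The quotient `Ω_E/∼`. -/
def OmegaQuot (G : FinGraph) : Type := Quot (OmegaRel G)

/-- The quotient topology on `Ω_E/∼`. -/
instance (G : FinGraph) : TopologicalSpace (OmegaQuot G) :=
  TopologicalSpace.coinduced (Quot.mk (OmegaRel G)) inferInstance

/-- The `m`-th vertex of a (possibly finite) path, if defined. -/
def vertAt {G : FinGraph} : Omega G → ℕ → Option G.V
  | .inl ⟨N, p⟩, m => if h : m ≤ N then some (p.1.vert ⟨m, Nat.lt_succ_of_le h⟩) else none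
  | .inr q, m => some (q.vert m)

/-- The basic set `U_{v,n} = {[μ] : ∃ η ∈ E^k, s(η) = v, r(η) = μ_{n+k}}`. -/
def Uvn (G : FinGraph) (v : G.V) (n : ℕ) : Set (OmegaQuot G) :=
  {x | ∃ ω : Omega G, Quot.mk (OmegaRel G) ω = x ∧
    ∃ (k : ℕ) (η : GPath G k), GPath.src η = v ∧ vertAt ω (n + k) = some (GPath.rng η)}

/-! The cylinder sets `U_ν` form a basis of `Ω_E`. Replacing the first `n + k` steps of a path
by `ν` followed by a path `η` from `r(ν)` changes neither its tail nor, for a finite path, its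
length and range; hence `q(U_ν) = U_{r(ν),n}`. The preimage `q⁻¹(U_{v,n})` is saturated,
because once level `n + k` is reachable from `v` in `k` steps, so is every later level `n + j`
in `j` steps, and it is a union of cylinders. So `q` is open, and the open sets `U_{v,n}`
contain the images of a basis under an open quotient map. -/

open TopologicalSpace

section PathSpace

variable {G : FinGraph}

namespace GPath

lemma vert_eq_src {n : ℕ} (p : GPath G n) {i : Fin (n + 1)} (hi : i.1 = 0) : p.vert i = p.src :=
  congrArg p.vert (Fin.ext hi)

lemma vert_eq_rng {n : ℕ} (p : GPath G n) {i : Fin (n + 1)} (hi : i.1 = n) : p.vert i = p.rng :=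
  congrArg p.vert (Fin.ext hi)

def nil (v : G.V) : GPath G 0 :=
  ⟨fun _ => v, fun i => i.elim0, fun i => i.elim0, fun i => i.elim0⟩

def snoc {k : ℕ} (p : GPath G k) (e : G.E) (h : G.s e = p.rng) : GPath G (k + 1) where
  vert := Fin.snoc p.vert (G.r e)
  edge := Fin.snoc p.edge e
  src_eq := Fin.lastCases (by simpa [GPath.rng] using h) fun j => by simpa using p.src_eq j
  rng_eq := Fin.lastCases (by simp) fun j => by
    rw [Fin.succ_castSucc, Fin.snoc_castSucc, Fin.snoc_castSucc]
    exact p.rng_eq j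

@[simp] lemma snoc_src {k : ℕ} (p : GPath G k) (e : G.E) (h : G.s e = p.rng) :
    (p.snoc e h).src = p.src :=
  Fin.snoc_castSucc (α := fun _ => G.V) (G.r e) p.vert 0

@[simp] lemma snoc_rng {k : ℕ} (p : GPath G k) (e : G.E) (h : G.s e = p.rng) :
    (p.snoc e h).rng = G.r e := by
  simp [snoc, GPath.rng]

section Append

variable {n k : ℕ} (ν : GPath G n) (η : GPath G k) (h : η.src = ν.rng)

def append : GPath G (n + k) where
  vert i := if hi : i.1 ≤ n then ν.vert ⟨i, by omega⟩ else η.vert ⟨i - n, by omega⟩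
  edge i := if hi : i.1 < n then ν.edge ⟨i, hi⟩ else η.edge ⟨i - n, by omega⟩
  src_eq i := by
    by_cases hi : i.1 < n
    · simp only [hi, dif_pos, Fin.val_castSucc, hi.le]
      exact ν.src_eq ⟨i, hi⟩
    · simp only [hi, dif_neg, not_false_eq_true, Fin.val_castSucc, η.src_eq]
      split_ifs with hin
      · rw [η.vert_eq_src (by simp; omega), h, ν.vert_eq_rng (by simp; omega)]
      · rfl
  rng_eq i := by
    by_cases hi : i.1 < n
    · simp only [hi, dif_pos, Fin.val_succ, Nat.succ_le_of_lt hi]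
      exact ν.rng_eq ⟨i, hi⟩
    · simp only [hi, dif_neg, not_false_eq_true, Fin.val_succ, show ¬ i.1 + 1 ≤ n by omega,
        η.rng_eq]
      exact congrArg η.vert (Fin.ext (by simp; omega))

variable {ν η h}

lemma append_vert_of_le {i : ℕ} (hi : i ≤ n) :
    (ν.append η h).vert ⟨i, by omega⟩ = ν.vert ⟨i, by omega⟩ := dif_pos hi

lemma append_edge_of_lt {i : ℕ} (hi : i < n) :
    (ν.append η h).edge ⟨i, by omega⟩ = ν.edge ⟨i, hi⟩ := dif_pos hi

@[simp] lemma append_rng : (ν.append η h).rng = η.rng := by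
  simp only [GPath.rng, append, Fin.val_last]
  split_ifs with hk
  · rw [ν.vert_eq_rng (by simp; omega), ← h]
    exact (η.vert_eq_src (i := 0) rfl).symm.trans (η.vert_eq_rng (by simp; omega))
  · exact η.vert_eq_rng (by simp)

end Append

def replacePrefix {m N : ℕ} (p : GPath G N) (μ : GPath G m) (hm : m ≤ N)
    (h : p.vert ⟨m, by omega⟩ = μ.rng) : GPath G N where
  vert j := if hj : j.1 ≤ m then μ.vert ⟨j, by omega⟩ else p.vert j
  edge j := if hj : j.1 < m then μ.edge ⟨j, hj⟩ else p.edge j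
  src_eq j := by
    by_cases hj : j.1 < m
    · simp only [hj, dif_pos, Fin.val_castSucc, hj.le]
      exact μ.src_eq ⟨j, hj⟩
    · simp only [hj, dif_neg, not_false_eq_true, Fin.val_castSucc, p.src_eq]
      split_ifs with hjm
      · rw [μ.vert_eq_rng (by simp; omega), ← h]
        exact congrArg p.vert (Fin.ext (by simp; omega))
      · rfl
  rng_eq j := by
    by_cases hj : j.1 < m
    · simp only [hj, dif_pos, Fin.val_succ, Nat.succ_le_of_lt hj]
      exact μ.rng_eq ⟨j, hj⟩
    · simp only [hj, dif_neg, not_false_eq_true, Fin.val_succ, show ¬ j.1 + 1 ≤ m by omega]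
      exact p.rng_eq j

lemma replacePrefix_rng {m N : ℕ} (p : GPath G N) (μ : GPath G m) (hm : m ≤ N)
    (h : p.vert ⟨m, by omega⟩ = μ.rng) : (p.replacePrefix μ hm h).rng = p.rng := by
  simp only [GPath.rng, replacePrefix, Fin.val_last]
  split_ifs with hN
  · rw [μ.vert_eq_rng (by simp; omega), ← h]
    exact congrArg p.vert (Fin.ext (by simp; omega))
  · rfl

end GPath

def InfPath.replacePrefix {m : ℕ} (q : InfPath G) (μ : GPath G m) (h : q.vert m = μ.rng) :
    InfPath G where
  vert j := if hj : j ≤ m then μ.vert ⟨j, by omega⟩ else q.vert j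
  edge j := if hj : j < m then μ.edge ⟨j, hj⟩ else q.edge j
  src_eq j := by
    by_cases hj : j < m
    · simp only [hj, dif_pos, hj.le]
      exact μ.src_eq ⟨j, hj⟩
    · simp only [hj, dif_neg, not_false_eq_true, q.src_eq]
      split_ifs with hjm
      · rw [μ.vert_eq_rng (by simp; omega), ← h, show j = m by omega]
      · rfl
  rng_eq j := by
    by_cases hj : j < m
    · simp only [hj, dif_pos, Nat.succ_le_of_lt hj]
      exact μ.rng_eq ⟨j, hj⟩
    · simp only [hj, dif_neg, not_false_eq_true, show ¬ j + 1 ≤ m by omega]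
      exact q.rng_eq j

def edgeAt : Omega G → ℕ → Option G.E
  | .inl ⟨N, p⟩, m => if h : m < N then some (p.1.edge ⟨m, h⟩) else none
  | .inr q, m => some (q.edge m)

lemma vertAt_inl_eq_some_iff {N m : ℕ} {p : {p : GPath G N // IsSink G p.rng}} {w : G.V} :
    vertAt (.inl ⟨N, p⟩ : Omega G) m = some w ↔
      ∃ h : m ≤ N, p.1.vert ⟨m, by omega⟩ = w := by
  simp [vertAt]

lemma edgeAt_inl_eq_some_iff {N m : ℕ} {p : {p : GPath G N // IsSink G p.rng}} {e : G.E} :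
    edgeAt (.inl ⟨N, p⟩ : Omega G) m = some e ↔ ∃ h : m < N, p.1.edge ⟨m, h⟩ = e := by
  simp [edgeAt]

lemma extendsPath_iff {n : ℕ} (ν : GPath G n) (ω : Omega G) :
    ExtendsPath ν ω ↔
      (∀ i (hi : i ≤ n), vertAt ω i = some (ν.vert ⟨i, by omega⟩)) ∧
      ∀ i (hi : i < n), edgeAt ω i = some (ν.edge ⟨i, hi⟩) := by
  rcases ω with ⟨N, p⟩ | q
  · constructor
    · rintro ⟨hn, hv, he⟩
      exact ⟨fun i hi => vertAt_inl_eq_some_iff.2 ⟨hi.trans hn, hv ⟨i, by omega⟩⟩,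
        fun i hi => edgeAt_inl_eq_some_iff.2 ⟨hi.trans_le hn, he ⟨i, hi⟩⟩⟩
    · rintro ⟨hv, he⟩
      obtain ⟨hn, -⟩ := vertAt_inl_eq_some_iff.1 (hv n le_rfl)
      exact ⟨hn, fun i => (vertAt_inl_eq_some_iff.1 (hv i (by omega))).2,
        fun i => (edgeAt_inl_eq_some_iff.1 (he i i.2)).2⟩
  · exact ⟨fun ⟨hv, he⟩ => ⟨fun i _ => congrArg some (hv ⟨i, by omega⟩),
        fun i hi => congrArg some (he ⟨i, hi⟩)⟩,
      fun ⟨hv, he⟩ => ⟨fun i => Option.some.inj (hv i (by omega)),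
        fun i => Option.some.inj (he i i.2)⟩⟩

lemma ExtendsPath.vertAt_eq_rng {n : ℕ} {ν : GPath G n} {ω : Omega G} (h : ExtendsPath ν ω) :
    vertAt ω n = some ν.rng :=
  ((extendsPath_iff ν ω).1 h).1 n le_rfl

lemma ExtendsPath.of_append {n k : ℕ} {ν : GPath G n} {η : GPath G k} {h : η.src = ν.rng}
    {ω : Omega G} (hω : ExtendsPath (ν.append η h) ω) : ExtendsPath ν ω := by
  obtain ⟨hv, he⟩ := (extendsPath_iff _ ω).1 hω
  refine (extendsPath_iff ν ω).2 ⟨fun i hi => ?_, fun i hi => ?_⟩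
  · rw [hv i (by omega), GPath.append_vert_of_le hi]
  · rw [he i (by omega), GPath.append_edge_of_lt hi]

lemma exists_extendsPath {m : ℕ} {ω : Omega G} {w : G.V} (h : vertAt ω m = some w) :
    ∃ μ : GPath G m, μ.rng = w ∧ ExtendsPath μ ω := by
  rcases ω with ⟨N, p⟩ | q
  · obtain ⟨hm, rfl⟩ := vertAt_inl_eq_some_iff.1 h
    exact ⟨⟨fun i => p.1.vert (Fin.castLE (by omega) i), fun i => p.1.edge (Fin.castLE hm i),
      fun i => p.1.src_eq _, fun i => p.1.rng_eq _⟩, rfl, hm, fun _ => rfl, fun _ => rfl⟩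
  · exact ⟨⟨fun i => q.vert i, fun i => q.edge i, fun i => q.src_eq i, fun i => q.rng_eq i⟩,
      (Option.some.inj h :), fun _ => rfl, fun _ => rfl⟩

lemma exists_vertAt_zero (ω : Omega G) : ∃ w, vertAt ω 0 = some w := by
  rcases ω with ⟨N, p⟩ | q
  · exact ⟨_, vertAt_inl_eq_some_iff.2 ⟨N.zero_le, rfl⟩⟩
  · exact ⟨_, rfl⟩

lemma exists_edge_of_vertAt_succ {ω : Omega G} {m : ℕ} {w : G.V}
    (h : vertAt ω (m + 1) = some w) : ∃ e, vertAt ω m = some (G.s e) ∧ G.r e = w := by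
  rcases ω with ⟨N, p⟩ | q
  · obtain ⟨hm, rfl⟩ := vertAt_inl_eq_some_iff.1 h
    exact ⟨p.1.edge ⟨m, hm⟩,
      vertAt_inl_eq_some_iff.2 ⟨by omega, (p.1.src_eq ⟨m, hm⟩).symm⟩, p.1.rng_eq _⟩
  · exact ⟨q.edge m, congrArg some (q.src_eq m).symm, (q.rng_eq m).trans (Option.some.inj h)⟩

lemma exists_path_to_vertAt_of_le {ω : Omega G} {n k j : ℕ} (η : GPath G k)
    (hη : vertAt ω (n + k) = some η.rng) (hkj : k ≤ j) {w : G.V}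
    (hw : vertAt ω (n + j) = some w) : ∃ η' : GPath G j, η'.src = η.src ∧ η'.rng = w := by
  induction j, hkj using Nat.le_induction generalizing w with
  | base => exact ⟨η, rfl, Option.some.inj (hη.symm.trans hw)⟩
  | succ j _ ih =>
    obtain ⟨e, he, rfl⟩ := exists_edge_of_vertAt_succ hw
    obtain ⟨η', hsrc, hrng⟩ := ih he
    exact ⟨η'.snoc e hrng.symm, by simp [hsrc], by simp⟩

def cylinder {n : ℕ} (ν : GPath G n) : Set (Omega G) := {ω | ExtendsPath ν ω}

lemma cylinder_subset_of_extendsPath {m m' : ℕ} (hle : m ≤ m') {μ : GPath G m}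
    {μ' : GPath G m'} {ω : Omega G} (h : ExtendsPath μ ω) (h' : ExtendsPath μ' ω) :
    cylinder μ' ⊆ cylinder μ := by
  intro ω' hω'
  obtain ⟨hv, he⟩ := (extendsPath_iff μ ω).1 h
  obtain ⟨hv', he'⟩ := (extendsPath_iff μ' ω).1 h'
  obtain ⟨hv'', he''⟩ := (extendsPath_iff μ' ω').1 hω'
  refine (extendsPath_iff μ ω').2 ⟨fun i hi => ?_, fun i hi => ?_⟩
  · rw [hv'' i (by omega), ← hv' i (by omega), hv i hi]
  · rw [he'' i (by omega), ← he' i (by omega), he i hi]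

lemma isTopologicalBasis_cylinder :
    IsTopologicalBasis {U : Set (Omega G) | ∃ (n : ℕ) (ν : GPath G n), U = cylinder ν} := by
  refine ⟨?_, ?_, rfl⟩
  · rintro _ ⟨n, ν, rfl⟩ _ ⟨n', ν', rfl⟩ ω ⟨hω, hω'⟩
    rcases le_total n n' with hle | hle
    · exact ⟨_, ⟨n', ν', rfl⟩, hω',
        Set.subset_inter (cylinder_subset_of_extendsPath hle hω hω') le_rfl⟩
    · exact ⟨_, ⟨n, ν, rfl⟩, hω,
        Set.subset_inter le_rfl (cylinder_subset_of_extendsPath hle hω' hω)⟩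
  · refine Set.eq_univ_of_forall fun ω => ?_
    obtain ⟨w, hw⟩ := exists_vertAt_zero ω
    obtain ⟨μ, -, hμ⟩ := exists_extendsPath hw
    exact ⟨_, ⟨0, μ, rfl⟩, hμ⟩

lemma omegaRel_equivalence : Equivalence (OmegaRel G) where
  refl
    | .inl _ => ⟨rfl, rfl⟩
    | .inr _ => ⟨0, fun _ _ => rfl⟩
  symm {x y} h := by
    rcases x with ⟨_, _⟩ | _ <;> rcases y with ⟨_, _⟩ | _
    · exact ⟨h.1.symm, h.2.symm⟩
    · exact h.elim
    · exact h.elim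
    · obtain ⟨N, hN⟩ := h
      exact ⟨N, fun k hk => (hN k hk).symm⟩
  trans {x y z} h h' := by
    rcases x with ⟨_, _⟩ | _ <;> rcases y with ⟨_, _⟩ | _ <;>
      rcases z with ⟨_, _⟩ | _ <;> try first | exact h.elim | exact h'.elim
    · exact ⟨h.1.trans h'.1, h.2.trans h'.2⟩
    · obtain ⟨N, hN⟩ := h
      obtain ⟨N', hN'⟩ := h'
      exact ⟨max N N', fun k hk => (hN k (by omega)).trans (hN' k (by omega))⟩

lemma quot_mk_eq_iff_omegaRel {ω ω' : Omega G} :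
    Quot.mk (OmegaRel G) ω = Quot.mk (OmegaRel G) ω' ↔ OmegaRel G ω ω' :=
  Quot.eq.trans omegaRel_equivalence.eqvGen_iff

lemma exists_omegaRel_extendsPath {m : ℕ} (μ : GPath G m) {ω : Omega G}
    (h : vertAt ω m = some μ.rng) : ∃ ω', OmegaRel G ω ω' ∧ ExtendsPath μ ω' := by
  rcases ω with ⟨N, p, hp⟩ | q
  · obtain ⟨hm, hμ⟩ := vertAt_inl_eq_some_iff.1 h
    have hrng := p.replacePrefix_rng μ hm hμ
    exact ⟨.inl ⟨N, p.replacePrefix μ hm hμ, hrng ▸ hp⟩, ⟨rfl, hrng.symm⟩,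
      hm, fun i => dif_pos (Nat.lt_succ_iff.1 i.2), fun i => dif_pos i.2⟩
  · refine ⟨.inr (q.replacePrefix μ (Option.some.inj h)), ⟨m, fun j hj => ?_⟩,
      fun i => dif_pos (Nat.lt_succ_iff.1 i.2), fun i => dif_pos i.2⟩
    simp [InfPath.replacePrefix, show ¬ j < m by omega]

def preUvn (v : G.V) (n : ℕ) : Set (Omega G) :=
  {ω | ∃ (k : ℕ) (η : GPath G k), η.src = v ∧ vertAt ω (n + k) = some η.rng}

lemma Uvn_eq_image_preUvn (v : G.V) (n : ℕ) :
    Uvn G v n = Quot.mk (OmegaRel G) '' preUvn v n :=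
  Set.ext fun _ => exists_congr fun _ => and_comm

lemma preUvn_saturated {v : G.V} {n : ℕ} {ω ω' : Omega G} (hrel : OmegaRel G ω ω')
    (hω : ω ∈ preUvn v n) : ω' ∈ preUvn v n := by
  obtain ⟨k, η, rfl, hη⟩ := hω
  rcases ω with ⟨N, p⟩ | q <;> rcases ω' with ⟨N', p'⟩ | q'
  · obtain ⟨rfl, hrng⟩ := hrel
    obtain ⟨hk, -⟩ := vertAt_inl_eq_some_iff.1 hη
    obtain ⟨η', hsrc, hrng'⟩ := exists_path_to_vertAt_of_le η hη (j := N - n) (by omega)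
      (vertAt_inl_eq_some_iff.2 ⟨by omega, p.1.vert_eq_rng (by simp; omega)⟩)
    refine ⟨N - n, η', hsrc, vertAt_inl_eq_some_iff.2 ⟨by omega, ?_⟩⟩
    rw [p'.1.vert_eq_rng (by simp; omega), hrng', hrng]
  · exact hrel.elim
  · exact hrel.elim
  · obtain ⟨N, hN⟩ := hrel
    obtain ⟨η', hsrc, hrng⟩ := exists_path_to_vertAt_of_le η hη (le_max_left k N) rfl
    refine ⟨max k N, η', hsrc, congrArg some ?_⟩
    rw [hrng, ← q.src_eq, ← q'.src_eq, hN _ (by omega)]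

lemma preimage_Uvn (v : G.V) (n : ℕ) : Quot.mk (OmegaRel G) ⁻¹' Uvn G v n = preUvn v n := by
  refine Set.Subset.antisymm ?_ fun ω hω => ⟨ω, rfl, hω⟩
  rintro ω ⟨ω₀, hq, hω₀⟩
  exact preUvn_saturated (quot_mk_eq_iff_omegaRel.1 hq) hω₀

lemma isOpen_preUvn (v : G.V) (n : ℕ) : IsOpen (preUvn (G := G) v n) := by
  refine isTopologicalBasis_cylinder.isOpen_iff.2 ?_
  rintro ω ⟨k, η, rfl, hη⟩
  obtain ⟨μ, hμ, hωμ⟩ := exists_extendsPath hη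
  exact ⟨_, ⟨_, μ, rfl⟩, hωμ, fun _ hω' => ⟨k, η, rfl, hμ ▸ hω'.vertAt_eq_rng⟩⟩

lemma isOpen_Uvn (v : G.V) (n : ℕ) : IsOpen (Uvn G v n) :=
  isOpen_coinduced.2 <| (preimage_Uvn v n).symm ▸ isOpen_preUvn v n

lemma image_cylinder {n : ℕ} (ν : GPath G n) :
    Quot.mk (OmegaRel G) '' cylinder ν = Uvn G ν.rng n := by
  rw [Uvn_eq_image_preUvn]
  refine Set.Subset.antisymm
    (Set.image_mono fun ω hω => ⟨0, .nil ν.rng, rfl, hω.vertAt_eq_rng⟩) ?_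
  rintro _ ⟨ω, ⟨k, η, hsrc, hη⟩, rfl⟩
  obtain ⟨ω', hrel, hω'⟩ :=
    exists_omegaRel_extendsPath (ν.append η hsrc) (by rwa [GPath.append_rng])
  exact ⟨ω', hω'.of_append, (quot_mk_eq_iff_omegaRel.2 hrel).symm⟩

lemma isOpenMap_quot_mk_omegaRel : IsOpenMap (Quot.mk (OmegaRel G)) :=
  isTopologicalBasis_cylinder.isOpenMap_iff.2 <| by
    rintro _ ⟨n, ν, rfl⟩
    rw [image_cylinder]
    exact isOpen_Uvn _ _

end PathSpace

/-- The quotient map `q : Ω_E → Ω_E/∼` is open, and the sets `U_{v,n}` form a basis for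
the quotient topology. -/
theorem omegaQuot_isOpenMap_and_basis (G : FinGraph) :
    IsOpenMap (Quot.mk (OmegaRel G)) ∧
    TopologicalSpace.IsTopologicalBasis
      {U : Set (OmegaQuot G) | ∃ (v : G.V) (n : ℕ), U = Uvn G v n} := by
  have hopen := isOpenMap_quot_mk_omegaRel (G := G)
  refine ⟨hopen, (isTopologicalBasis_cylinder.isQuotientMap isQuotientMap_quot_mk hopen)
    |>.of_isOpen_of_subset ?_ ?_⟩
  · rintro _ ⟨v, n, rfl⟩
    exact isOpen_Uvn v n
  · rintro _ ⟨_, ⟨n, ν, rfl⟩, rfl⟩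
    exact ⟨ν.rng, n, image_cylinder ν⟩
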